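/- Let B be s.p.d. with block structure 𝔅. Then β(J B Jᵀ) is minimized over full-rank block-diagonal matrices J if and only if there exists α > 0 such that (Jᵀ J)_{kk} = α (B_{kk})⁻¹ for every diagonal block index k. -/

import Mathlib

open Matrix

/-- Scalar index type for a block structure with `n` blocks of sizes `m i`. -/
abbrev BIdx {n : ℕ} (m : Fin n → ℕ) := (i : Fin n) × Fin (m i)

/-- The `(i,j)` block of a block-structured matrix. -/
def blk {n : ℕ} {m : Fin n → ℕ} (A : Matrix (BIdx m) (BIdx m) ℝ) (i j : Fin n) :
    Matrix (Fin (m i)) (Fin (m j)) ℝ :=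
  fun a b => A ⟨i, a⟩ ⟨j, b⟩

/-- A matrix is block-diagonal with respect to the block structure. -/
def IsBlockDiag {n : ℕ} {m : Fin n → ℕ} (J : Matrix (BIdx m) (BIdx m) ℝ) : Prop :=
  ∀ p q : BIdx m, p.1 ≠ q.1 → J p q = 0

/-- The Kaporin number of a matrix. -/
noncomputable def kaporin {N : Type*} [Fintype N] [DecidableEq N] (B : Matrix N N ℝ) : ℝ :=
  B.trace / (Fintype.card N * B.det ^ ((Fintype.card N : ℝ)⁻¹))

/-!
Write `D` for the block-diagonal part of `B` and pick a block-diagonal `J₀` with `J₀ᵀ J₀ = D⁻¹`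
(factor each `B_kk⁻¹ = F_kᵀ F_k`). For block-diagonal `J` the trace of `J B Jᵀ` only
sees `D`, so with `K = J J₀⁻¹` one gets `tr (J B Jᵀ) = tr (Kᵀ K)` and
`det (J B Jᵀ) = det (Kᵀ K) · det B · det J₀²`. Hence `β(J B Jᵀ) = s · β(Kᵀ K)` for a constant
`s > 0`. By AM-GM on eigenvalues, `β(M) ≥ 1` for `M` s.p.d. with equality iff `M` is a positive
multiple of the identity; since `J₀` attains `β = 1`, `J` is a minimiser iff `Kᵀ K = α I`, which
unwinds to `(Jᵀ J) D = α I`, i.e. `(Jᵀ J)_kk = α B_kk⁻¹`.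
-/

namespace Real

variable {ι : Type*} [Fintype ι] [Nonempty ι] {x : ι → ℝ}

lemma card_mul_prod_rpow_inv_card_le_sum (hx : ∀ i, 0 ≤ x i) :
    Fintype.card ι * (∏ i, x i) ^ (Fintype.card ι : ℝ)⁻¹ ≤ ∑ i, x i := by
  have h := geom_mean_le_arith_mean Finset.univ 1 x (by simp)
    (by simpa using Fintype.card_pos) (by simpa)
  simp only [Pi.one_apply, rpow_one, Finset.sum_const, Finset.card_univ, nsmul_eq_mul, mul_one,
    one_mul] at h
  rwa [le_div_iff₀' (by positivity)] at h

lemma sum_le_card_mul_prod_rpow_inv_card_iff (hx : ∀ i, 0 ≤ x i) :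
    ∑ i, x i ≤ Fintype.card ι * (∏ i, x i) ^ (Fintype.card ι : ℝ)⁻¹ ↔ ∀ i j, x i = x j := by
  set N : ℝ := (Fintype.card ι : ℝ)
  have hN : 0 < N := by positivity
  have h := geom_mean_eq_arith_mean_weighted_iff_of_pos Finset.univ (fun _ ↦ N⁻¹) x
    (by simp [hN]) (by simp [N]) (by simpa)
  simp only [Finset.mem_univ, forall_const, ← Finset.mul_sum] at h
  rw [← h, finsetProd_rpow _ _ (fun i _ ↦ hx i), (card_mul_prod_rpow_inv_card_le_sum hx).ge_iff_eq,
    eq_inv_mul_iff_mul_eq₀ hN.ne', eq_comm]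

end Real

namespace Matrix

section BlockDiagonal

variable {o R : Type*} [Fintype o] {m' : o → Type*} [∀ k, Fintype (m' k)]

lemma blockDiag'_blockDiagonal'_mul [DecidableEq o] [Semiring R]
    (F : ∀ k, Matrix (m' k) (m' k) R) (B : Matrix (Σ k, m' k) (Σ k, m' k) R) (k : o) :
    blockDiag' (blockDiagonal' F * B) k = F k * blockDiag' B k := by
  ext i j
  simp [blockDiag'_apply, mul_apply, blockDiagonal'_apply, Fintype.sum_sigma, dite_mul]

lemma trace_eq_sum_trace_blockDiag' [AddCommMonoid R] (M : Matrix (Σ k, m' k) (Σ k, m' k) R) :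
    trace M = ∑ k, trace (blockDiag' M k) := by
  simp [trace, Fintype.sum_sigma, blockDiag'_apply]

lemma trace_blockDiagonal'_mul [DecidableEq o] [Semiring R] (F : ∀ k, Matrix (m' k) (m' k) R)
    (B : Matrix (Σ k, m' k) (Σ k, m' k) R) :
    trace (blockDiagonal' F * B) = trace (blockDiagonal' F * blockDiagonal' (blockDiag' B)) := by
  rw [← blockDiagonal'_mul, trace_blockDiagonal', trace_eq_sum_trace_blockDiag']
  simp only [blockDiag'_blockDiagonal'_mul]

lemma isUnit_blockDiagonal' [DecidableEq o] [∀ k, DecidableEq (m' k)] [Semiring R]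
    {F : ∀ k, Matrix (m' k) (m' k) R} (hF : ∀ k, IsUnit (F k)) : IsUnit (blockDiagonal' F) :=
  (Pi.isUnit_iff.mpr hF).map (blockDiagonal'RingHom m' R)

end BlockDiagonal

section Square

variable {ι R : Type*} [Fintype ι] [DecidableEq ι]

lemma mul_eq_smul_one_iff_eq_smul_inv [CommRing R] {S B : Matrix ι ι R} (hB : IsUnit B.det)
    (α : R) : S * B = α • 1 ↔ S = α • B⁻¹ := by
  constructor
  · intro h
    rw [← mul_nonsing_inv_cancel_right B S hB, h, smul_mul_assoc, one_mul]
  · rintro rfl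
    rw [smul_mul_assoc, nonsing_inv_mul _ hB]

lemma inv_mul_mul_eq_smul_one_iff [CommRing R] {P X : Matrix ι ι R} (hP : IsUnit P.det)
    (α : R) : P⁻¹ * X * P = α • 1 ↔ X = α • 1 := by
  refine ⟨fun h ↦ ?_, fun h ↦ by rw [h, mul_smul_comm, smul_mul_assoc, mul_one,
    nonsing_inv_mul _ hP]⟩
  have hX : X = P * (P⁻¹ * X * P) * P⁻¹ := by
    rw [← Matrix.mul_assoc P, mul_nonsing_inv_cancel_right _ _ hP,
      mul_nonsing_inv_cancel_left _ _ hP]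
  rw [hX, h, mul_smul_comm, smul_mul_assoc, mul_one, mul_nonsing_inv _ hP]

lemma transpose_mul_self_eq_smul_one_iff [CommRing R] {D J₀ J : Matrix ι ι R}
    (hJ₀ : IsUnit J₀) (hD : J₀ᵀ * J₀ * D = 1) (α : R) :
    (J * J₀⁻¹)ᵀ * (J * J₀⁻¹) = α • 1 ↔ Jᵀ * J * D = α • 1 := by
  have hJ₀det : IsUnit J₀ᵀ.det := by rwa [det_transpose, ← isUnit_iff_isUnit_det]
  have hsim : (J * J₀⁻¹)ᵀ * (J * J₀⁻¹) = J₀ᵀ⁻¹ * (Jᵀ * J * D) * J₀ᵀ := by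
    rw [← inv_eq_right_inv hD, Matrix.mul_inv_rev, transpose_mul, transpose_nonsing_inv]
    simp only [Matrix.mul_assoc, nonsing_inv_mul _ hJ₀det, Matrix.mul_one]
  rw [hsim, inv_mul_mul_eq_smul_one_iff hJ₀det]

lemma transpose_mul_self_posDef {K : Matrix ι ι ℝ} (hK : IsUnit K) : (Kᵀ * K).PosDef := by
  simpa using PosDef.conjTranspose_mul_self K (mulVec_injective_iff_isUnit.mpr hK)

open scoped MatrixOrder in
lemma PosDef.exists_isUnit_transpose_mul_self_eq {A : Matrix ι ι ℝ} (hA : A.PosDef) :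
    ∃ F : Matrix ι ι ℝ, IsUnit F ∧ Fᵀ * F = A := by
  obtain ⟨F, hF, hFA⟩ :=
    CStarAlgebra.isStrictlyPositive_iff_eq_star_mul_self.mp hA.isStrictlyPositive
  exact ⟨F, hF, by simpa [star_eq_conjTranspose] using hFA.symm⟩

lemma IsHermitian.eq_smul_one_of_eigenvalues_eq [RCLike R] {A : Matrix ι ι R}
    (hA : A.IsHermitian) {c : ℝ} (h : ∀ i, hA.eigenvalues i = c) : A = c • 1 := by
  rw [← Algebra.algebraMap_eq_smul_one]
  refine CFC.eq_algebraMap_of_spectrum_subset_singleton A c ?_ hA.isSelfAdjoint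
  rw [hA.spectrum_real_eq_range_eigenvalues]
  rintro _ ⟨i, rfl⟩
  exact h i

end Square

end Matrix

section Kaporin

variable {ι : Type*} [Fintype ι] [DecidableEq ι]

lemma kaporin_of_isEmpty [IsEmpty ι] (M : Matrix ι ι ℝ) : kaporin M = 0 := by
  simp [kaporin]

lemma kaporin_smul_one [Nonempty ι] {c : ℝ} (hc : 0 < c) :
    kaporin (c • (1 : Matrix ι ι ℝ)) = 1 := by
  have hN : Fintype.card ι ≠ 0 := Fintype.card_ne_zero
  rw [kaporin, trace_smul, trace_one, det_smul, det_one, mul_one,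
    Real.pow_rpow_inv_natCast hc.le hN]
  field_simp
  ring

lemma kaporin_one [Nonempty ι] : kaporin (1 : Matrix ι ι ℝ) = 1 := by
  simpa using kaporin_smul_one (ι := ι) one_pos

lemma Matrix.IsHermitian.kaporin_eq {M : Matrix ι ι ℝ} (hM : M.IsHermitian) :
    kaporin M = (∑ i, hM.eigenvalues i) /
      (Fintype.card ι * (∏ i, hM.eigenvalues i) ^ (Fintype.card ι : ℝ)⁻¹) := by
  simp [kaporin, hM.trace_eq_sum_eigenvalues, hM.det_eq_prod_eigenvalues]

lemma Matrix.PosDef.card_mul_prod_eigenvalues_rpow_pos [Nonempty ι] {M : Matrix ι ι ℝ}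
    (hM : M.PosDef) :
    0 < Fintype.card ι * (∏ i, hM.isHermitian.eigenvalues i) ^ (Fintype.card ι : ℝ)⁻¹ :=
  mul_pos (by positivity) <| Real.rpow_pos_of_pos (Finset.prod_pos fun i _ ↦ hM.eigenvalues_pos i) _

lemma Matrix.PosDef.one_le_kaporin [Nonempty ι] {M : Matrix ι ι ℝ} (hM : M.PosDef) :
    1 ≤ kaporin M := by
  rw [hM.isHermitian.kaporin_eq, one_le_div hM.card_mul_prod_eigenvalues_rpow_pos]
  exact Real.card_mul_prod_rpow_inv_card_le_sum fun i ↦ (hM.eigenvalues_pos i).le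

lemma Matrix.PosDef.kaporin_le_one_iff [Nonempty ι] {M : Matrix ι ι ℝ} (hM : M.PosDef) :
    kaporin M ≤ 1 ↔ ∃ c : ℝ, 0 < c ∧ M = c • 1 := by
  refine ⟨fun h ↦ ?_, fun ⟨c, hc, hMc⟩ ↦ by rw [hMc, kaporin_smul_one hc]⟩
  have hpos := hM.eigenvalues_pos
  rw [hM.isHermitian.kaporin_eq, div_le_one hM.card_mul_prod_eigenvalues_rpow_pos,
    Real.sum_le_card_mul_prod_rpow_inv_card_iff fun i ↦ (hpos i).le] at h
  obtain ⟨i₀⟩ := ‹Nonempty ι›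
  exact ⟨_, hpos i₀, hM.isHermitian.eq_smul_one_of_eigenvalues_eq fun i ↦ h i i₀⟩

lemma kaporin_eq_of_trace_eq_of_det_eq {X Y : Matrix ι ι ℝ} {q : ℝ} (htr : X.trace = Y.trace)
    (hdet : X.det = Y.det * q) (hY : 0 ≤ Y.det) (hq : 0 ≤ q) :
    kaporin X = (q ^ (Fintype.card ι : ℝ)⁻¹)⁻¹ * kaporin Y := by
  rw [kaporin, kaporin, htr, hdet, Real.mul_rpow hY hq]
  ring

lemma kaporin_conj_eq {B D J₀ J : Matrix ι ι ℝ} (hJ₀ : IsUnit J₀) (hD : J₀ᵀ * J₀ * D = 1)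
    (hB : 0 ≤ B.det) (htr : (Jᵀ * J * B).trace = (Jᵀ * J * D).trace) :
    kaporin (J * B * Jᵀ) = ((B.det * J₀.det ^ 2) ^ (Fintype.card ι : ℝ)⁻¹)⁻¹ *
      kaporin ((J * J₀⁻¹)ᵀ * (J * J₀⁻¹)) := by
  have hJ₀det : J₀.det ≠ 0 := ((isUnit_iff_isUnit_det _).mp hJ₀).ne_zero
  refine kaporin_eq_of_trace_eq_of_det_eq ?_ ?_ ?_ (by positivity)
  · calc (J * B * Jᵀ).trace = (Jᵀ * J * D).trace := by rw [trace_mul_cycle, htr]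
      _ = (J * D * Jᵀ).trace := (trace_mul_cycle _ _ _).symm
      _ = (J * J₀⁻¹ * (J * J₀⁻¹)ᵀ).trace := by
        rw [← inv_eq_right_inv hD, Matrix.mul_inv_rev, transpose_mul, transpose_nonsing_inv]
        simp only [Matrix.mul_assoc]
      _ = ((J * J₀⁻¹)ᵀ * (J * J₀⁻¹)).trace := trace_mul_comm _ _
  · simp only [det_mul, det_transpose, det_nonsing_inv, Ring.inverse_eq_inv']
    field_simp
  · rw [det_mul, det_transpose]
    exact mul_self_nonneg _

lemma kaporin_conj_le_kaporin_conj_iff {B D J₀ J J' : Matrix ι ι ℝ} (hJ₀ : IsUnit J₀)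
    (hD : J₀ᵀ * J₀ * D = 1) (hB : 0 < B.det) (htr : (Jᵀ * J * B).trace = (Jᵀ * J * D).trace)
    (htr' : (J'ᵀ * J' * B).trace = (J'ᵀ * J' * D).trace) :
    kaporin (J * B * Jᵀ) ≤ kaporin (J' * B * J'ᵀ) ↔
      kaporin ((J * J₀⁻¹)ᵀ * (J * J₀⁻¹)) ≤ kaporin ((J' * J₀⁻¹)ᵀ * (J' * J₀⁻¹)) := by
  have hJ₀det : J₀.det ≠ 0 := ((isUnit_iff_isUnit_det _).mp hJ₀).ne_zero
  rw [kaporin_conj_eq hJ₀ hD hB.le htr, kaporin_conj_eq hJ₀ hD hB.le htr']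
  exact mul_le_mul_iff_right₀ (by positivity)

end Kaporin

section Blocks

variable {n : ℕ} {m : Fin n → ℕ}

lemma blk_self (A : Matrix (BIdx m) (BIdx m) ℝ) (k : Fin n) : blk A k k = blockDiag' A k := rfl

lemma isBlockDiag_blockDiagonal' (F : ∀ k, Matrix (Fin (m k)) (Fin (m k)) ℝ) :
    IsBlockDiag (blockDiagonal' F) :=
  fun _ _ h ↦ blockDiagonal'_apply_ne F _ _ h

lemma IsBlockDiag.eq_blockDiagonal' {J : Matrix (BIdx m) (BIdx m) ℝ} (hJ : IsBlockDiag J) :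
    J = blockDiagonal' (blockDiag' J) := by
  ext ⟨i, a⟩ ⟨j, b⟩
  rcases eq_or_ne i j with rfl | h
  · rw [blockDiagonal'_apply_eq, blockDiag'_apply]
  · rw [blockDiagonal'_apply_ne _ _ _ h, hJ _ _ h]

lemma IsBlockDiag.transpose {J : Matrix (BIdx m) (BIdx m) ℝ} (hJ : IsBlockDiag J) :
    IsBlockDiag Jᵀ :=
  fun p q h ↦ hJ q p h.symm

lemma IsBlockDiag.mul {J K : Matrix (BIdx m) (BIdx m) ℝ} (hJ : IsBlockDiag J)
    (hK : IsBlockDiag K) : IsBlockDiag (J * K) := by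
  rw [hJ.eq_blockDiagonal', hK.eq_blockDiagonal', ← blockDiagonal'_mul]
  exact isBlockDiag_blockDiagonal' _

lemma IsBlockDiag.trace_mul {S : Matrix (BIdx m) (BIdx m) ℝ} (hS : IsBlockDiag S)
    (B : Matrix (BIdx m) (BIdx m) ℝ) :
    (S * B).trace = (S * blockDiagonal' (blockDiag' B)).trace := by
  rw [hS.eq_blockDiagonal']
  exact trace_blockDiagonal'_mul _ B

lemma Matrix.PosDef.posDef_blk {B : Matrix (BIdx m) (BIdx m) ℝ} (hB : B.PosDef) (k : Fin n) :
    (blk B k k).PosDef :=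
  hB.submatrix sigma_mk_injective

lemma exists_isBlockDiag_transpose_mul_self_mul_eq_one {B : Matrix (BIdx m) (BIdx m) ℝ}
    (hB : B.PosDef) :
    ∃ J₀ : Matrix (BIdx m) (BIdx m) ℝ, IsUnit J₀ ∧ IsBlockDiag J₀ ∧
      J₀ᵀ * J₀ * blockDiagonal' (blockDiag' B) = 1 := by
  choose F hF hFB using fun k ↦ (hB.posDef_blk k).inv.exists_isUnit_transpose_mul_self_eq
  refine ⟨blockDiagonal' F, isUnit_blockDiagonal' hF, isBlockDiag_blockDiagonal' F, ?_⟩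
  rw [blockDiagonal'_transpose, ← blockDiagonal'_mul, ← blockDiagonal'_mul, ← blockDiagonal'_one]
  congr! with k
  rw [hFB, Pi.one_apply]
  exact nonsing_inv_mul _ (hB.posDef_blk k).det_pos.ne'.isUnit

lemma IsBlockDiag.mul_blockDiagonal'_eq_smul_one_iff {S B : Matrix (BIdx m) (BIdx m) ℝ}
    (hS : IsBlockDiag S) (hB : ∀ k, IsUnit (blk B k k).det) (α : ℝ) :
    S * blockDiagonal' (blockDiag' B) = α • 1 ↔ ∀ k, blk S k k = α • (blk B k k)⁻¹ := by
  rw [hS.eq_blockDiagonal', ← blockDiagonal'_mul, ← blockDiagonal'_one, ← blockDiagonal'_smul,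
    blockDiagonal'_inj, funext_iff]
  refine forall_congr' fun k ↦ ?_
  simp only [blockDiag'_blockDiagonal', Pi.smul_apply, blk_self]
  exact mul_eq_smul_one_iff_eq_smul_inv (hB k) α

end Blocks

/-- For `B` s.p.d. with block structure, `β(J B Jᵀ)` is minimized over full-rank
block-diagonal matrices `J` iff there is `α > 0` with `(Jᵀ J)_{kk} = α (B_{kk})⁻¹`
for every diagonal block index `k`. -/
theorem kaporin_blockDiag_min_iff {n : ℕ} {m : Fin n → ℕ}
    (B : Matrix (BIdx m) (BIdx m) ℝ) (hB : B.PosDef)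
    (J : Matrix (BIdx m) (BIdx m) ℝ) (hJ : IsUnit J) (hJd : IsBlockDiag J) :
    (∀ J' : Matrix (BIdx m) (BIdx m) ℝ, IsUnit J' → IsBlockDiag J' →
        kaporin (J * B * Jᵀ) ≤ kaporin (J' * B * J'ᵀ)) ↔
      ∃ α : ℝ, 0 < α ∧ ∀ k : Fin n, blk (Jᵀ * J) k k = α • (blk B k k)⁻¹ := by
  rcases isEmpty_or_nonempty (BIdx m) with hE | hNE
  -- With no indices `kaporin` is `0 / 0 = 0` and all blocks are empty.
  · refine iff_of_true (fun _ _ _ ↦ by simp only [kaporin_of_isEmpty, le_refl])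
      ⟨1, one_pos, fun k ↦ ?_⟩
    have : IsEmpty (Fin (m k)) := ⟨fun a ↦ hE.false ⟨k, a⟩⟩
    exact Subsingleton.elim _ _
  obtain ⟨J₀, hJ₀, hJ₀d, hD⟩ := exists_isBlockDiag_transpose_mul_self_mul_eq_one hB
  have hle_iff {J' : Matrix (BIdx m) (BIdx m) ℝ} (hJ'd : IsBlockDiag J') :=
    kaporin_conj_le_kaporin_conj_iff hJ₀ hD hB.det_pos ((hJd.transpose.mul hJd).trace_mul B)
      ((hJ'd.transpose.mul hJ'd).trace_mul B)
  have hK {J' : Matrix (BIdx m) (BIdx m) ℝ} (hJ' : IsUnit J') :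
      ((J' * J₀⁻¹)ᵀ * (J' * J₀⁻¹)).PosDef :=
    transpose_mul_self_posDef (hJ'.mul (isUnit_nonsing_inv_iff.mpr hJ₀))
  have hK₀ : (J₀ * J₀⁻¹)ᵀ * (J₀ * J₀⁻¹) = 1 := by
    rw [mul_nonsing_inv _ ((isUnit_iff_isUnit_det _).mp hJ₀), transpose_one, mul_one]
  have hmin : (∀ J' : Matrix (BIdx m) (BIdx m) ℝ, IsUnit J' → IsBlockDiag J' →
      kaporin (J * B * Jᵀ) ≤ kaporin (J' * B * J'ᵀ)) ↔
      kaporin ((J * J₀⁻¹)ᵀ * (J * J₀⁻¹)) ≤ 1 := by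
    refine ⟨fun h ↦ ?_, fun h J' hJ' hJ'd ↦ (hle_iff hJ'd).mpr (h.trans (hK hJ').one_le_kaporin)⟩
    simpa only [hK₀, kaporin_one] using (hle_iff hJ₀d).mp (h J₀ hJ₀ hJ₀d)
  rw [hmin, (hK hJ).kaporin_le_one_iff]
  refine exists_congr fun α ↦ and_congr_right fun _ ↦ ?_
  rw [transpose_mul_self_eq_smul_one_iff hJ₀ hD]
  exact (hJd.transpose.mul hJd).mul_blockDiagonal'_eq_smul_one_iff
    (fun k ↦ (hB.posDef_blk k).det_pos.ne'.isUnit) α
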